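/- The function F defined by the recurrence F(a,b) = Σ_{i ∈ [0,a] \ {1}} 2^{-a} C(a,i) F(a−i, b−1) + a·2^{-a} (with F(a,b) = 0 when a ≤ 0 or b ≤ 0) is non-decreasing in its second argument: for all a and all d₁ ≥ d₂ ≥ 0, F(a, d₁) ≥ F(a, d₂). -/
import Mathlib


/-- The recurrence `F(a,b) = Σ_{i ∈ [0,a] \ {1}} 2^{-a} C(a,i) F(a-i, b-1) + a·2^{-a}`,
with `F(a,b) = 0` if `a ≤ 0` or `b ≤ 0`. -/
noncomputable def Fprob : ℕ → ℕ → ℝ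
  | _, 0 => 0
  | 0, _ + 1 => 0
  | a, b + 1 =>
      (∑ i ∈ (Finset.range (a + 1)).erase 1,
        (2 : ℝ)⁻¹ ^ a * (a.choose i : ℝ) * Fprob (a - i) b) + (a : ℝ) * (2 : ℝ)⁻¹ ^ a

lemma Fprob_succ (a b : ℕ) : Fprob (a + 1) (b + 1) =
    (∑ i ∈ (Finset.range (a + 1 + 1)).erase 1,
      (2 : ℝ)⁻¹ ^ (a + 1) * ((a + 1).choose i : ℝ) * Fprob (a + 1 - i) b)
      + ((a + 1 : ℕ) : ℝ) * (2 : ℝ)⁻¹ ^ (a + 1) := rfl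

lemma Fprob_nonneg : ∀ b a, 0 ≤ Fprob a b := by
  intro b
  induction b with
  | zero => intro a; simp [Fprob]
  | succ b ih =>
    intro a
    cases a with
    | zero => simp [Fprob]
    | succ a =>
      rw [Fprob_succ]
      have h1 : (0:ℝ) ≤ ∑ i ∈ (Finset.range (a + 1 + 1)).erase 1,
          (2 : ℝ)⁻¹ ^ (a+1) * ((a+1).choose i : ℝ) * Fprob (a + 1 - i) b := by
        apply Finset.sum_nonneg
        intro i _
        exact mul_nonneg (by positivity) (ih _)
      have h2 : (0:ℝ) ≤ ((a + 1 : ℕ) : ℝ) * (2 : ℝ)⁻¹ ^ (a + 1) := by positivity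
      linarith

lemma Fprob_step : ∀ b a, Fprob a b ≤ Fprob a (b + 1) := by
  intro b
  induction b with
  | zero => intro a; simpa [Fprob] using Fprob_nonneg 1 a
  | succ b ih =>
    intro a
    cases a with
    | zero => simp [Fprob]
    | succ a =>
      rw [Fprob_succ, Fprob_succ]
      refine add_le_add (Finset.sum_le_sum fun i _ => ?_) le_rfl
      exact mul_le_mul_of_nonneg_left (ih _) (by positivity)

/-- `F` is non-decreasing in its second argument. -/
theorem stmt2 : ∀ (a d₁ d₂ : ℕ), d₂ ≤ d₁ → Fprob a d₂ ≤ Fprob a d₁ := by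
  intro a d₁ d₂ h
  induction h with
  | refl => exact le_rfl
  | step h ih => exact le_trans ih (Fprob_step _ _)
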